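/- arXiv:1605.08898 — 2 statements merged into one kernel-verified Lean document; each statement's English description precedes it below -/
import Mathlib

section
/- Let Σ be an n×n symmetric positive definite matrix, and define b_j (j = 0,…,n−1) as above with v_j = b_jᵀ Σ b_j. Then the precision matrix admits the decomposition Σ⁻¹ = ∑_{j=0}^{n−1} b_j b_jᵀ / v_j. -/
open Matrix

/-- Leading principal `j × j` submatrix. -/
noncomputable def lead {n : ℕ} (S : Matrix (Fin n) (Fin n) ℝ) (j : ℕ) (h : j ≤ n) :
    Matrix (Fin j) (Fin j) ℝ := S.submatrix (Fin.castLE h) (Fin.castLE h)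

/-- First `j` entries of column `j+1` (0-indexed: column `j`). -/
def colv {n : ℕ} (S : Matrix (Fin n) (Fin n) ℝ) (j : ℕ) (h : j < n) :
    Fin j → ℝ := fun i => S (Fin.castLE h.le i) ⟨j, h⟩

/-- The vector `b_j`: first `j` entries are `-Σ_jj⁻¹ σ_j`, entry `j+1` is `1`, rest are `0`. -/
noncomputable def bvec {n : ℕ} (S : Matrix (Fin n) (Fin n) ℝ) (j : ℕ) (h : j < n) :
    Fin n → ℝ := fun i =>
  if hij : (i : ℕ) < j then -(((lead S j h.le)⁻¹).mulVec (colv S j h)) ⟨i, hij⟩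
  else if (i : ℕ) = j then 1 else 0

/-! The vector `b_j` is built so that `Σ b_j` vanishes in the coordinates `< j`, while `b_i` is
supported in the coordinates `≤ i`. Hence `b_iᵀ Σ b_j = 0` for `i < j`, and by symmetry for all
`i ≠ j`: the matrix `B` with rows `b_j` satisfies `B Σ Bᵀ = diag v`, so
`Σ⁻¹ = Bᵀ (diag v)⁻¹ B = ∑ⱼ b_j b_jᵀ / v_j`. -/

section Diagonalization

variable {ι R : Type*} [Fintype ι] [DecidableEq ι]

theorem sum_smul_vecMulVec_eq_transpose_mul_diagonal_mul [CommSemiring R] (b : ι → ι → R)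
    (c : ι → R) : ∑ j, c j • vecMulVec (b j) (b j) = (of b)ᵀ * diagonal c * of b := by
  ext i k
  rw [Matrix.mul_apply, Matrix.sum_apply]
  simp only [mul_diagonal, Matrix.smul_apply, vecMulVec_apply, transpose_apply, of_apply,
    smul_eq_mul]
  exact Finset.sum_congr rfl fun j _ => by ring

theorem mul_mul_transpose_eq_diagonal_of_lt [CommSemiring R] [LinearOrder ι]
    {S : Matrix ι ι R} (hS : S.IsSymm) (b : ι → ι → R)
    (horth : ∀ j k, j < k → b j ⬝ᵥ S *ᵥ b k = 0) :
    of b * S * (of b)ᵀ = diagonal fun j => b j ⬝ᵥ S *ᵥ b j := by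
  ext j k
  have hentry : (of b * S * (of b)ᵀ) j k = b j ⬝ᵥ S *ᵥ b k := by
    rw [dotProduct_mulVec, dotProduct_comm]
    simp [mul_apply, vecMul, dotProduct, mul_comm]
  rw [hentry]
  rcases lt_trichotomy j k with hjk | rfl | hkj
  · rw [horth j k hjk, diagonal_apply_ne _ hjk.ne]
  · rw [diagonal_apply_eq]
  · rw [diagonal_apply_ne _ hkj.ne', dotProduct_mulVec, ← hS.eq, vecMul_transpose,
      dotProduct_comm, horth k j hkj]

theorem inv_eq_transpose_mul_diagonal_inv_mul [Field R] {S P : Matrix ι ι R} {v : ι → R}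
    (hv : ∀ j, v j ≠ 0) (hPSP : P * S * Pᵀ = diagonal v) :
    S⁻¹ = Pᵀ * diagonal (fun j => (v j)⁻¹) * P := by
  refine inv_eq_left_inv ?_
  have hleft : diagonal (fun j => (v j)⁻¹) * P * S * Pᵀ = 1 := by
    rw [Matrix.mul_assoc _ P, Matrix.mul_assoc, hPSP, diagonal_mul_diagonal,
      ← diagonal_one]
    exact congrArg diagonal (funext fun j => inv_mul_cancel₀ (hv j))
  simpa only [Matrix.mul_assoc] using mul_eq_one_comm.mp hleft

end Diagonalization

theorem dotProduct_extend_zero {m n R : Type*} [Fintype m] [Fintype n] [NonUnitalNonAssocSemiring R]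
    {e : m → n} (he : Function.Injective e) (u : n → R) (x : m → R) :
    u ⬝ᵥ Function.extend e x 0 = (u ∘ e) ⬝ᵥ x :=
  (Fintype.sum_of_injective e he _ _
    (fun l hl => by rw [Function.extend_apply' _ _ _ hl, Pi.zero_apply, mul_zero])
    (fun l => by rw [he.extend_apply]; rfl)).symm

theorem mulVec_extend_zero_apply {m n R : Type*} [Fintype m] [Fintype n]
    [NonUnitalNonAssocSemiring R] (S : Matrix n n R) {e : m → n} (he : Function.Injective e)
    (x : m → R) (i : m) :
    (S *ᵥ Function.extend e x 0) (e i) = (S.submatrix e e *ᵥ x) i :=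
  dotProduct_extend_zero he _ x

section GramSchmidt

variable {n : ℕ} (S : Matrix (Fin n) (Fin n) ℝ)

theorem bvec_eq_extend_add_single (j : ℕ) (h : j < n) :
    bvec S j h = Function.extend (Fin.castLE h.le) (-((lead S j h.le)⁻¹ *ᵥ colv S j h)) 0
      + Pi.single ⟨j, h⟩ 1 := by
  funext i
  simp only [bvec, Pi.add_apply]
  split_ifs with hij hj
  · rw [Pi.single_eq_of_ne (Fin.ne_of_val_ne hij.ne), add_zero]
    exact ((Fin.castLE_injective h.le).extend_apply
      (-((lead S j h.le)⁻¹ *ᵥ colv S j h)) 0 ⟨i, hij⟩).symm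
  all_goals
    rw [Function.extend_apply' _ _ _ fun ⟨i', hi'⟩ => hij (hi' ▸ i'.isLt), Pi.zero_apply,
      zero_add]
  · rw [show i = ⟨j, h⟩ from Fin.ext hj, Pi.single_eq_same]
  · rw [Pi.single_eq_of_ne (Fin.ne_of_val_ne hj)]

theorem bvec_apply_self {j : ℕ} (h : j < n) : bvec S j h ⟨j, h⟩ = 1 := by
  simp [bvec]

theorem bvec_apply_of_lt {j : ℕ} (h : j < n) {i : Fin n} (hji : j < i) : bvec S j h i = 0 := by
  simp [bvec, hji.not_gt, hji.ne']

theorem mulVec_bvec_apply_of_lt {j : ℕ} (h : j < n) (hA : IsUnit (lead S j h.le).det)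
    {i : Fin n} (hij : (i : ℕ) < j) : (S *ᵥ bvec S j h) i = 0 := by
  obtain ⟨i, rfl⟩ : ∃ i' : Fin j, Fin.castLE h.le i' = i := ⟨⟨i, hij⟩, rfl⟩
  rw [bvec_eq_extend_add_single, mulVec_add, Pi.add_apply,
    mulVec_extend_zero_apply _ (Fin.castLE_injective _), mulVec_single_one]
  change (lead S j h.le *ᵥ -((lead S j h.le)⁻¹ *ᵥ colv S j h)) i + colv S j h i = 0
  rw [mulVec_neg, mulVec_mulVec, Pi.neg_apply, mul_nonsing_inv _ hA, one_mulVec, neg_add_cancel]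

theorem bvec_dotProduct_mulVec_bvec_of_lt (hS : S.PosDef) {j k : Fin n} (hjk : j < k) :
    bvec S j j.isLt ⬝ᵥ S *ᵥ bvec S k k.isLt = 0 :=
  Finset.sum_eq_zero fun i _ => by
    rcases lt_or_ge (i : ℕ) k with hik | hki
    · have hA := (hS.submatrix (Fin.castLE_injective k.isLt.le)).det_pos.ne'.isUnit
      rw [mulVec_bvec_apply_of_lt S k.isLt hA hik, mul_zero]
    · rw [bvec_apply_of_lt S j.isLt (Fin.lt_def.mp hjk |>.trans_le hki), zero_mul]

end GramSchmidt

theorem precision_decomposition {n : ℕ} (S : Matrix (Fin n) (Fin n) ℝ) (hpd : S.PosDef) :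
    S⁻¹ = ∑ j : Fin n,
      (bvec S j j.isLt ⬝ᵥ S.mulVec (bvec S j j.isLt))⁻¹ •
        vecMulVec (bvec S j j.isLt) (bvec S j j.isLt) := by
  set b : Fin n → Fin n → ℝ := fun j => bvec S j j.isLt
  have hv : ∀ j, b j ⬝ᵥ S *ᵥ b j ≠ 0 := fun j => by
    have hb : b j ≠ 0 := fun h0 =>
      one_ne_zero <| (bvec_apply_self S j.isLt).symm.trans (congrFun h0 j)
    simpa using (hpd.dotProduct_mulVec_pos hb).ne'
  have hdiag := mul_mul_transpose_eq_diagonal_of_lt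
    (isHermitian_iff_isSymm.mp hpd.isHermitian) b
    fun j k hjk => bvec_dotProduct_mulVec_bvec_of_lt S hpd hjk
  rw [inv_eq_transpose_mul_diagonal_inv_mul hv hdiag,
    sum_smul_vecMulVec_eq_transpose_mul_diagonal_mul]
end

section
/- (Eckart–Young–Mirsky for symmetric matrices in Frobenius norm) Let S be an m×m real symmetric matrix with spectral decomposition S = ∑_k μ_k u_k u_kᵀ where |μ_1| ≥ … ≥ |μ_m|, and let r ≤ m. Then the truncation S_r = ∑_{k≤r} μ_k u_k u_kᵀ satisfies ‖S_r − S‖_F ≤ ‖X − S‖_F for every m×m matrix X with rank(X) ≤ r. -/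
open Matrix

/-- Frobenius norm of a real matrix. -/
noncomputable def frob {m n : ℕ} (A : Matrix (Fin m) (Fin n) ℝ) : ℝ :=
  Real.sqrt (∑ i, ∑ j, (A i j) ^ 2)

/-!
Let `v₁, …, vₙ` be an orthonormal basis of `ker X`, so that `n ≥ m - r`. Then
`‖X - S‖_F² ≥ ∑ᵢ ‖(X - S) vᵢ‖² = ∑ᵢ ‖S vᵢ‖² = ∑ₖ μₖ² wₖ` with `wₖ = ∑ᵢ ⟨uₖ, vᵢ⟩²`.
By Bessel and Parseval `0 ≤ wₖ ≤ 1` and `∑ₖ wₖ = n ≥ m - r`; since the `μₖ²` decrease, such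
weights give `∑ₖ μₖ² wₖ ≥ ∑_{k ≥ r} μₖ² = ‖S_r - S‖_F²`.
-/

def DotOrthonormal {ι n : Type*} [DecidableEq ι] [Fintype n] (v : ι → n → ℝ) : Prop :=
  ∀ i j, v i ⬝ᵥ v j = if i = j then 1 else 0

section

variable {ι n p : Type*} [Fintype n]

theorem mulVec_sum_smul_vecMulVec [Fintype ι] (v : ι → n → ℝ) (μ : ι → ℝ) (x : n → ℝ) :
    (∑ i, μ i • vecMulVec (v i) (v i)) *ᵥ x = ∑ i, (μ i * (v i ⬝ᵥ x)) • v i := by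
  simp only [sum_mulVec, smul_mulVec, vecMulVec_mulVec, op_smul_eq_smul, smul_smul]

variable [DecidableEq ι]

theorem dotOrthonormal_iff_orthonormal {v : ι → n → ℝ} :
    DotOrthonormal v ↔ Orthonormal ℝ (fun i => WithLp.toLp 2 (v i)) := by
  simp only [orthonormal_iff_ite, EuclideanSpace.inner_toLp_toLp, star_trivial,
    dotProduct_comm, DotOrthonormal]

namespace DotOrthonormal

variable {v : ι → n → ℝ}

theorem dotProduct_sum_smul_self (hv : DotOrthonormal v) (s : Finset ι) (c : ι → ℝ) :
    (∑ i ∈ s, c i • v i) ⬝ᵥ (∑ i ∈ s, c i • v i) = ∑ i ∈ s, c i ^ 2 := by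
  simp only [sum_dotProduct, dotProduct_sum, smul_dotProduct, dotProduct_smul, hv _ _,
    smul_eq_mul, mul_ite, mul_one, mul_zero, Finset.sum_ite_eq']
  exact Finset.sum_congr rfl fun i hi => by rw [if_pos hi, sq]

theorem sum_sq_dotProduct_le [Fintype ι] (hv : DotOrthonormal v) (x : n → ℝ) :
    ∑ i, (v i ⬝ᵥ x) ^ 2 ≤ x ⬝ᵥ x := by
  have := (dotOrthonormal_iff_orthonormal.mp hv).sum_inner_products_le
    (s := Finset.univ) (WithLp.toLp 2 x)
  rw [← real_inner_self_eq_norm_sq, EuclideanSpace.inner_toLp_toLp] at this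
  simpa [EuclideanSpace.inner_toLp_toLp, dotProduct_comm x] using this

theorem sum_sq_dotProduct_eq [DecidableEq n] {u : n → n → ℝ} (hu : DotOrthonormal u)
    (x : n → ℝ) : ∑ k, (u k ⬝ᵥ x) ^ 2 = x ⬝ᵥ x := by
  have hU : of u * (of u)ᵀ = 1 := by
    ext k l
    simpa [mul_apply, one_apply, dotProduct] using hu k l
  calc ∑ k, (u k ⬝ᵥ x) ^ 2 = (of u *ᵥ x) ⬝ᵥ (of u *ᵥ x) := by
        simp only [dotProduct, mulVec, of_apply, sq]
    _ = x ⬝ᵥ x := by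
        rw [dotProduct_mulVec, ← vecMul_transpose, vecMul_vecMul, mul_eq_one_comm.mp hU,
          vecMul_one]

theorem sum_dotProduct_mulVec_le [Fintype ι] [Fintype p] (hv : DotOrthonormal v)
    (A : Matrix p n ℝ) : ∑ i, (A *ᵥ v i) ⬝ᵥ (A *ᵥ v i) ≤ ∑ j, ∑ l, A j l ^ 2 := by
  calc ∑ i, (A *ᵥ v i) ⬝ᵥ (A *ᵥ v i) = ∑ j, ∑ i, (v i ⬝ᵥ A j) ^ 2 := by
        rw [Finset.sum_comm]
        refine Finset.sum_congr rfl fun i _ => ?_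
        simp only [dotProduct, sq, mulVec]
        exact Finset.sum_congr rfl fun j _ => by simp only [mul_comm (v i _)]
    _ ≤ ∑ j, A j ⬝ᵥ A j := Finset.sum_le_sum fun j _ => hv.sum_sq_dotProduct_le (A j)
    _ = ∑ j, ∑ l, A j l ^ 2 := by simp only [dotProduct, sq]

theorem sum_sq_sum_smul_vecMulVec (hv : DotOrthonormal v) (s : Finset ι) (μ : ι → ℝ) :
    ∑ j, ∑ l, (∑ i ∈ s, μ i • vecMulVec (v i) (v i)) j l ^ 2 = ∑ i ∈ s, μ i ^ 2 := by
  have hrow : ∀ j, (∑ i ∈ s, μ i • vecMulVec (v i) (v i)) j = ∑ i ∈ s, (μ i * v i j) • v i := by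
    intro j; ext l
    simp only [Matrix.sum_apply, Finset.sum_apply, Matrix.smul_apply, vecMulVec_apply,
      Pi.smul_apply, smul_eq_mul, mul_assoc]
  calc ∑ j, ∑ l, (∑ i ∈ s, μ i • vecMulVec (v i) (v i)) j l ^ 2
      = ∑ j, ∑ i ∈ s, (μ i * v i j) ^ 2 := by
        refine Finset.sum_congr rfl fun j _ => ?_
        rw [← hv.dotProduct_sum_smul_self, ← hrow]
        simp only [dotProduct, sq]
    _ = ∑ i ∈ s, μ i ^ 2 * (v i ⬝ᵥ v i) := by
        rw [Finset.sum_comm]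
        refine Finset.sum_congr rfl fun i _ => ?_
        rw [dotProduct, Finset.mul_sum]
        exact Finset.sum_congr rfl fun j _ => by ring
    _ = ∑ i ∈ s, μ i ^ 2 := by simp [hv _ _]

theorem sum_sq_sum_filter_sub_sum_smul_vecMulVec [Fintype ι] (hv : DotOrthonormal v)
    (P : ι → Prop) [DecidablePred P] (μ : ι → ℝ) :
    ∑ j, ∑ l, ((∑ i ∈ Finset.univ.filter P, μ i • vecMulVec (v i) (v i))
        - ∑ i, μ i • vecMulVec (v i) (v i)) j l ^ 2
      = ∑ i ∈ Finset.univ.filter (fun i => ¬ P i), μ i ^ 2 := by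
  rw [← Finset.sum_filter_add_sum_filter_not Finset.univ P, sub_add_cancel_left]
  simpa [neg_sq] using hv.sum_sq_sum_smul_vecMulVec _ μ

theorem dotProduct_self_mulVec_sum_smul_vecMulVec [Fintype ι] (hv : DotOrthonormal v)
    (μ : ι → ℝ) (x : n → ℝ) :
    ((∑ i, μ i • vecMulVec (v i) (v i)) *ᵥ x) ⬝ᵥ ((∑ i, μ i • vecMulVec (v i) (v i)) *ᵥ x)
      = ∑ i, μ i ^ 2 * (v i ⬝ᵥ x) ^ 2 := by
  simp only [mulVec_sum_smul_vecMulVec, hv.dotProduct_sum_smul_self, mul_pow]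

theorem sum_sum_sq_dotProduct_eq_card [Fintype ι] [DecidableEq n] {u : n → n → ℝ}
    (hv : DotOrthonormal v) (hu : DotOrthonormal u) :
    ∑ k, ∑ i, (v i ⬝ᵥ u k) ^ 2 = Fintype.card ι := by
  rw [Finset.sum_comm]
  simp [dotProduct_comm (v _), hu.sum_sq_dotProduct_eq, hv _ _]

end DotOrthonormal

theorem Matrix.exists_dotOrthonormal_mulVec_eq_zero (X : Matrix p n ℝ) :
    ∃ v : Fin (Fintype.card n - X.rank) → n → ℝ, DotOrthonormal v ∧ ∀ i, X *ᵥ v i = 0 := by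
  let K := (LinearMap.ker X.mulVecLin).map (WithLp.linearEquiv 2 ℝ (n → ℝ)).symm.toLinearMap
  have hK : Module.finrank ℝ K = Fintype.card n - X.rank := by
    have := LinearMap.finrank_range_add_finrank_ker X.mulVecLin
    rw [Module.finrank_fintype_fun_eq_card] at this
    rw [LinearEquiv.finrank_map_eq, rank]
    omega
  let b := (stdOrthonormalBasis ℝ K).reindex (finCongr hK)
  refine ⟨fun i => WithLp.ofLp (b i : EuclideanSpace ℝ n), ?_, fun i => ?_⟩
  · rw [dotOrthonormal_iff_orthonormal]
    exact b.orthonormal.comp_linearIsometry K.subtypeₗᵢ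
  · simpa [K, Submodule.mem_map_equiv] using (b i).2

end

theorem sum_le_sum_mul_of_threshold {ι : Type*} [Fintype ι] {lam w : ι → ℝ} {s : Finset ι}
    {c : ℝ} (hc : 0 ≤ c) (hlo : ∀ i ∉ s, c ≤ lam i) (hhi : ∀ i ∈ s, lam i ≤ c)
    (hw0 : ∀ i, 0 ≤ w i) (hw1 : ∀ i, w i ≤ 1) (hcard : (s.card : ℝ) ≤ ∑ i, w i) :
    ∑ i ∈ s, lam i ≤ ∑ i, lam i * w i := by
  classical
  let e : ι → ℝ := fun i => if i ∈ s then 1 else 0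
  have hlam_e : ∑ i ∈ s, lam i = ∑ i, lam i * e i := by simp [e]
  have hsum_e : ∑ i, e i = s.card := by simp [e]
  have hterm : ∀ i, 0 ≤ (lam i - c) * (w i - e i) := by
    intro i
    by_cases hi : i ∈ s
    · simp only [e, if_pos hi]
      exact mul_nonneg_of_nonpos_of_nonpos (by linarith [hhi i hi]) (by linarith [hw1 i])
    · simp only [e, if_neg hi]
      exact mul_nonneg (by linarith [hlo i hi]) (by linarith [hw0 i])
  have hsplit : ∑ i, lam i * w i - ∑ i, lam i * e i
      = ∑ i, (lam i - c) * (w i - e i) + c * (∑ i, w i - ∑ i, e i) := by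
    simp only [mul_sub, Finset.mul_sum, ← Finset.sum_sub_distrib, ← Finset.sum_add_distrib]
    exact Finset.sum_congr rfl fun i _ => by ring
  have hc_slack : 0 ≤ c * (∑ i, w i - ∑ i, e i) := mul_nonneg hc (by linarith)
  linarith [Finset.sum_nonneg fun i (_ : i ∈ Finset.univ) => hterm i]

theorem sum_filter_not_lt_le_sum_mul_of_antitone {m r : ℕ} {lam w : Fin m → ℝ}
    (hlam0 : ∀ k, 0 ≤ lam k) (hlam : Antitone lam) (hw0 : ∀ k, 0 ≤ w k) (hw1 : ∀ k, w k ≤ 1)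
    (hsum : ((m - r : ℕ) : ℝ) ≤ ∑ k, w k) :
    ∑ k ∈ Finset.univ.filter (fun k : Fin m => ¬ (k : ℕ) < r), lam k ≤ ∑ k, lam k * w k := by
  have hcard : ((Finset.univ.filter (fun k : Fin m => ¬ (k : ℕ) < r)).card : ℝ) ≤ ∑ k, w k := by
    have := Finset.card_filter_add_card_filter_not (s := Finset.univ)
      (fun k : Fin m => (k : ℕ) < r)
    rw [Fin.card_filter_val_lt, Finset.card_univ, Fintype.card_fin] at this
    exact le_trans (by exact_mod_cast (by omega)) hsum
  by_cases hrm : r < m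
  · refine sum_le_sum_mul_of_threshold (c := lam ⟨r, hrm⟩) (hlam0 _) (fun k hk => hlam ?_)
      (fun k hk => hlam ?_) hw0 hw1 hcard
    · simp only [Finset.mem_filter, Finset.mem_univ, true_and, not_not] at hk
      exact Fin.mk_le_of_le_val hk.le
    · simp only [Finset.mem_filter, Finset.mem_univ, true_and, not_lt] at hk
      exact Fin.le_iff_val_le_val.mpr hk
  · refine sum_le_sum_mul_of_threshold le_rfl (fun k _ => hlam0 k) (fun k hk => ?_) hw0 hw1 hcard
    simp only [Finset.mem_filter, Finset.mem_univ, true_and] at hk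
    omega

theorem eckart_young_mirsky_symmetric_general {m : ℕ}
    (S : Matrix (Fin m) (Fin m) ℝ)
    (μ : Fin m → ℝ) (u : Fin m → Fin m → ℝ)
    (horth : ∀ k l, u k ⬝ᵥ u l = if k = l then (1 : ℝ) else 0)
    (hdecomp : S = ∑ k, μ k • vecMulVec (u k) (u k))
    (hord : Antitone fun k => |μ k|)
    (r : ℕ) :
    ∀ X : Matrix (Fin m) (Fin m) ℝ, X.rank ≤ r →
      frob ((∑ k ∈ Finset.univ.filter (fun k : Fin m => (k : ℕ) < r),
          μ k • vecMulVec (u k) (u k)) - S) ≤ frob (X - S) := by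
  intro X hX
  have hu : DotOrthonormal u := horth
  obtain ⟨v, hv, hXv⟩ := X.exists_dotOrthonormal_mulVec_eq_zero
  let w k := ∑ i, (v i ⬝ᵥ u k) ^ 2
  have hw1 : ∀ k, w k ≤ 1 := fun k => (hv.sum_sq_dotProduct_le (u k)).trans_eq (by simp [hu _ _])
  have hsum : ((m - r : ℕ) : ℝ) ≤ ∑ k, w k :=
    (Nat.cast_le.mpr (by simp only [Fintype.card_fin]; omega)).trans_eq
      (hv.sum_sum_sq_dotProduct_eq_card hu).symm
  have hanti : Antitone fun k => μ k ^ 2 := fun a b hab => by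
    simpa [sq_abs] using pow_le_pow_left₀ (abs_nonneg _) (hord hab) 2
  apply Real.sqrt_le_sqrt
  calc _ = ∑ k ∈ Finset.univ.filter (fun k : Fin m => ¬ (k : ℕ) < r), μ k ^ 2 := by
        rw [hdecomp, hu.sum_sq_sum_filter_sub_sum_smul_vecMulVec]
    _ ≤ ∑ k, μ k ^ 2 * w k := sum_filter_not_lt_le_sum_mul_of_antitone (fun _ => sq_nonneg _)
        hanti (fun _ => Finset.sum_nonneg fun _ _ => sq_nonneg _) hw1 hsum
    _ = ∑ i, (S *ᵥ v i) ⬝ᵥ (S *ᵥ v i) := by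
        simp only [hdecomp, hu.dotProduct_self_mulVec_sum_smul_vecMulVec, w, Finset.mul_sum,
          dotProduct_comm (v _)]
        exact Finset.sum_comm
    _ = ∑ i, ((X - S) *ᵥ v i) ⬝ᵥ ((X - S) *ᵥ v i) := by simp [hdecomp, sub_mulVec, hXv]
    _ ≤ _ := hv.sum_dotProduct_mulVec_le (X - S)

theorem eckart_young_mirsky_symmetric {m : ℕ}
    (S : Matrix (Fin m) (Fin m) ℝ) (hS : S.IsSymm)
    (μ : Fin m → ℝ) (u : Fin m → Fin m → ℝ)
    (horth : ∀ k l, u k ⬝ᵥ u l = if k = l then (1 : ℝ) else 0)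
    (hdecomp : S = ∑ k, μ k • vecMulVec (u k) (u k))
    (hord : Antitone fun k => |μ k|)
    (r : ℕ) (hr : r ≤ m) :
    ∀ X : Matrix (Fin m) (Fin m) ℝ, X.rank ≤ r →
      frob ((∑ k ∈ Finset.univ.filter (fun k : Fin m => (k : ℕ) < r),
          μ k • vecMulVec (u k) (u k)) - S) ≤ frob (X - S) :=
  eckart_young_mirsky_symmetric_general S μ u horth hdecomp hord r
end
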